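/- arXiv:2111.10162 — 7 statements merged into one kernel-verified Lean document; each statement's English description precedes it below -/
import Mathlib

section
/- Let R be a finite commutative ring with decidable equality, let g, n be positive integers, and let u_1, …, u_g ∈ R^n. Let A be a commutative monoid (written multiplicatively) and let X be a family of elements of A indexed by pairs (K, L) where, for 1 ≤ p ≤ g, K ∈ ([g] choose p) and L ∈ (R\{0})^p. Then ∏_{a ∈ R^g, a ≠ 0} ∏_{K ⊆ Vsupp(a), K ≠ ∅} X_{K, a_K}^{n_a(u_1,…,u_g)} = ∏_{p=1}^{g} ∏_{K ∈ ([g] choose p)} ∏_{L ∈ (R\{0})^p} X_{K,L}^{n_L(u_{K_1},…,u_{K_p})}. -/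
open scoped Classical

/-- **Lemma 1 (1)** of Chakraborty–Miezaki–Oura.
A pair `(K, L)` with `K ∈ ([g] choose p)` and `L ∈ (R \ {0})^p` is encoded as the
nonzero vector `b : Fin g → R` whose support (in increasing order) is `K` and whose
nonzero values are `L`; thus the family `X` is indexed by nonzero vectors of `R^g`.
For `a ∈ R^g`, `n_a(u_1, …, u_g)` is the number of coordinates `i` with
`(u_1 i, …, u_g i) = a`, and `n_L(u_{K_1}, …, u_{K_p})` is the number of coordinates
`i` with `u_j i = b j` for every `j` in the support of `b`. The inner product on the
left ranges over the pairs `(K, a_K)` for nonempty subtuples `K` of `Vsupp(a)`,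
i.e. over nonzero vectors `b` with `b j = a j` or `b j = 0` for every `j`. -/
theorem lemma_one_part_one
    {R : Type*} [CommRing R] [Fintype R] [DecidableEq R]
    {A : Type*} [CommMonoid A]
    {g n : ℕ} (hg : 0 < g) (hn : 0 < n)
    (u : Fin g → (Fin n → R)) (X : (Fin g → R) → A) :
    (∏ a ∈ Finset.univ.filter (fun a : Fin g → R => a ≠ 0),
      ∏ b ∈ Finset.univ.filter (fun b : Fin g → R =>
          b ≠ 0 ∧ ∀ j, b j = 0 ∨ b j = a j),
        X b ^ (Finset.univ.filter (fun i : Fin n => ∀ j, u j i = a j)).card)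
    = ∏ b ∈ Finset.univ.filter (fun b : Fin g → R => b ≠ 0),
        X b ^ (Finset.univ.filter
            (fun i : Fin n => ∀ j, b j ≠ 0 → u j i = b j)).card := by
  classical
  rw [Finset.prod_comm' (t' := Finset.univ.filter (fun b : Fin g → R => b ≠ 0))
      (s' := fun b => Finset.univ.filter (fun a : Fin g → R =>
        a ≠ 0 ∧ ∀ j, b j = 0 ∨ b j = a j))
      (by intro a b; simp only [Finset.mem_filter, Finset.mem_univ, true_and]; tauto)]
  refine Finset.prod_congr rfl ?_
  intro b hb
  simp only [Finset.mem_filter, Finset.mem_univ, true_and] at hb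
  rw [Finset.prod_pow_eq_pow_sum]
  congr 1
  have hmem : ∀ i ∈ Finset.univ.filter (fun i : Fin n => ∀ j, b j ≠ 0 → u j i = b j),
      (fun j => u j i) ∈ Finset.univ.filter (fun a : Fin g → R =>
        a ≠ 0 ∧ ∀ j, b j = 0 ∨ b j = a j) := by
    intro i hi
    simp only [Finset.mem_filter, Finset.mem_univ, true_and] at hi ⊢
    constructor
    · obtain ⟨j, hj⟩ := Function.ne_iff.mp hb
      simp only [Pi.zero_apply] at hj
      intro h
      have := congrFun h j
      simp only [Pi.zero_apply] at this
      exact hj (by rw [← hi j hj]; exact this)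
    · intro j
      by_cases h : b j = 0
      · exact Or.inl h
      · exact Or.inr (hi j h).symm
  rw [Finset.card_eq_sum_card_fiberwise hmem]
  refine Finset.sum_congr rfl ?_
  intro a ha
  simp only [Finset.mem_filter, Finset.mem_univ, true_and] at ha
  congr 1
  ext i
  simp only [Finset.mem_filter, Finset.mem_univ, true_and, funext_iff]
  constructor
  · intro h
    refine ⟨?_, h⟩
    intro j hj
    rcases ha.2 j with h0 | h0
    · exact absurd h0 hj
    · rw [h j, ← h0]
  · exact fun h => h.2
end

section
/- Let q be a prime power, let C be a linear code of length n over F_q (a subspace of F_q^n), let g be a positive integer, let A be a commutative ring, and let X be a family of elements of A indexed by pairs (K, L) with K ∈ ([g] choose p), L ∈ (F_q\{0})^p, 1 ≤ p ≤ g. Define x : F_q^g → A by x_0 := 1 and, for a ≠ 0, x_a := ∏_{K ⊆ Vsupp(a), K ≠ ∅} X_{K, a_K}. Then W_C^{(g)}(x) = I_C^{(g)}(X). -/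
open scoped Classical

/-- The `g`-th weight enumerator `W_C^{(g)}(x)`.  The sum ranges over all `g`-tuples
of (not necessarily distinct) codewords, and `n_a(u_1,…,u_g)` is the number of
coordinates `i` with `(u_1 i, …, u_g i) = a`. -/
noncomputable def WEnum {R : Type*} [CommRing R] [Fintype R] {A : Type*} [CommRing A]
    {n : ℕ} (C : Submodule R (Fin n → R)) (g : ℕ) (x : (Fin g → R) → A) : A :=
  ∑ u : Fin g → ↥C, ∏ a : Fin g → R,
    x a ^ (Finset.univ.filter (fun i : Fin n => ∀ j, (u j : Fin n → R) i = a j)).card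

/-- The `g`-th intersection enumerator `I_C^{(g)}(X)`.  A pair `(K, L)` with
`K ∈ ([g] choose p)`, `L ∈ (R \ {0})^p` is encoded as the nonzero vector
`b : Fin g → R` with support `K` and values `L`; the exponent of `X b` is
`n_L(u_{K_1}, …, u_{K_p})`, the number of coordinates `i` with `u_j i = b j`
for every `j` in the support of `b`. -/
noncomputable def IEnum {R : Type*} [CommRing R] [Fintype R] {A : Type*} [CommRing A]
    {n : ℕ} (C : Submodule R (Fin n → R)) (g : ℕ) (X : (Fin g → R) → A) : A :=
  ∑ u : Fin g → ↥C, ∏ b ∈ Finset.univ.filter (fun b : Fin g → R => b ≠ 0),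
    X b ^ (Finset.univ.filter
        (fun i : Fin n => ∀ j, b j ≠ 0 → (u j : Fin n → R) i = b j)).card

/-- **Theorem (WeightInter (1))**, over a finite field `F_q` (an arbitrary finite
field, since `q` ranges over all prime powers): substituting `x 0 := 1` and, for
`a ≠ 0`, `x a := ∏_{∅ ≠ K ⊆ Vsupp(a)} X_{K, a_K}` into the weight enumerator gives
the intersection enumerator.  Here `X_{K, a_K}` is encoded as `X` applied to the
vector agreeing with `a` on `K` and vanishing elsewhere. -/
theorem weight_eq_intersection_Fq
    {Fq : Type*} [Field Fq] [Fintype Fq]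
    {A : Type*} [CommRing A]
    {n g : ℕ} (hg : 0 < g)
    (C : Submodule Fq (Fin n → Fq))
    (X : (Fin g → Fq) → A)
    (x : (Fin g → Fq) → A)
    (hx0 : x 0 = 1)
    (hx : ∀ a : Fin g → Fq, a ≠ 0 →
      x a = ∏ K ∈ ((Finset.univ.filter (fun i : Fin g => a i ≠ 0)).powerset).erase ∅,
              X (fun i => if i ∈ K then a i else 0)) :
    WEnum C g x = IEnum C g X := by
  classical
  unfold WEnum IEnum
  refine Finset.sum_congr rfl fun u _ => ?_
  -- the key pointwise identity
  have main : ∀ a : Fin g → Fq,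
      (∏ b ∈ Finset.univ.filter
          (fun b : Fin g → Fq => b ≠ 0 ∧ ∀ j, b j ≠ 0 → a j = b j), X b) = x a := by
    intro a
    by_cases ha : a = 0
    · subst ha
      rw [hx0]
      apply Finset.prod_eq_one
      intro b hb
      exfalso
      simp only [Finset.mem_filter] at hb
      obtain ⟨-, hb0, hcomp⟩ := hb
      obtain ⟨j, hj⟩ := Function.ne_iff.mp hb0
      exact hj (hcomp j hj).symm
    · rw [hx a ha]
      refine Finset.prod_bij' (fun b _ => Finset.univ.filter (fun j => b j ≠ 0))
        (fun K _ => fun i => if i ∈ K then a i else 0) ?_ ?_ ?_ ?_ ?_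
      · intro b hb
        simp only [Finset.mem_filter, Finset.mem_univ, true_and] at hb
        obtain ⟨hb0, hcomp⟩ := hb
        rw [Finset.mem_erase, Finset.mem_powerset]
        constructor
        · intro h
          have h' : Finset.univ.filter (fun j => b j ≠ 0) = ∅ := h
          obtain ⟨j, hj⟩ := Function.ne_iff.mp hb0
          have hj' : b j ≠ 0 := by simpa using hj
          have hmem : j ∈ Finset.univ.filter (fun j => b j ≠ 0) := by simp [hj']
          rw [h'] at hmem
          exact absurd hmem (Finset.notMem_empty j)
        · intro j hj
          simp only [Finset.mem_filter, Finset.mem_univ, true_and] at hj ⊢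
          rw [hcomp j hj]; exact hj
      · intro K hK
        rw [Finset.mem_erase, Finset.mem_powerset] at hK
        obtain ⟨hKne, hKsub⟩ := hK
        simp only [Finset.mem_filter, Finset.mem_univ, true_and]
        constructor
        · obtain ⟨j, hj⟩ := Finset.nonempty_iff_ne_empty.mpr hKne
          intro h
          have := congrFun h j
          simp only [hj, if_pos, Pi.zero_apply] at this
          have haj := hKsub hj
          simp only [Finset.mem_filter] at haj
          exact haj.2 this
        · intro j hj
          by_cases hjK : j ∈ K
          · simp [hjK]
          · simp [hjK] at hj
      · intro b hb
        simp only [Finset.mem_filter, Finset.mem_univ, true_and] at hb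
        obtain ⟨hb0, hcomp⟩ := hb
        show (fun i => if i ∈ Finset.univ.filter (fun j => b j ≠ 0) then a i else 0) = b
        funext i
        by_cases hi : b i ≠ 0
        · rw [if_pos (Finset.mem_filter.mpr ⟨Finset.mem_univ i, hi⟩)]
          exact hcomp i hi
        · rw [if_neg (by simpa using hi)]
          push_neg at hi
          exact hi.symm
      · intro K hK
        rw [Finset.mem_erase, Finset.mem_powerset] at hK
        obtain ⟨hKne, hKsub⟩ := hK
        ext j
        simp only [Finset.mem_filter, Finset.mem_univ, true_and]
        constructor
        · intro hj
          by_cases hjK : j ∈ K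
          · exact hjK
          · simp [hjK] at hj
        · intro hj
          have haj := hKsub hj
          simp only [Finset.mem_filter] at haj
          simpa [hj] using haj.2
      · intro b hb
        simp only [Finset.mem_filter, Finset.mem_univ, true_and] at hb
        obtain ⟨hb0, hcomp⟩ := hb
        show X b = X (fun i => if i ∈ Finset.univ.filter (fun j => b j ≠ 0) then a i else 0)
        congr 1
        funext i
        by_cases hi : b i ≠ 0
        · rw [if_pos (Finset.mem_filter.mpr ⟨Finset.mem_univ i, hi⟩)]
          exact (hcomp i hi).symm
        · rw [if_neg (by simpa using hi)]
          push_neg at hi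
          exact hi
  -- rewrite both sides as a product over coordinates
  have hL : (∏ a : Fin g → Fq,
      x a ^ (Finset.univ.filter
        (fun i : Fin n => ∀ j, (u j : Fin n → Fq) i = a j)).card)
      = ∏ i : Fin n, x (fun j => (u j : Fin n → Fq) i) := by
    rw [← Finset.prod_fiberwise Finset.univ
      (fun i : Fin n => (fun j => (u j : Fin n → Fq) i))
      (fun i : Fin n => x (fun j => (u j : Fin n → Fq) i))]
    refine Finset.prod_congr rfl fun a _ => ?_
    have hset : Finset.univ.filter (fun i : Fin n => ∀ j, (u j : Fin n → Fq) i = a j)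
        = Finset.univ.filter (fun i : Fin n => (fun j => (u j : Fin n → Fq) i) = a) :=
      Finset.filter_congr fun i _ => by simp [funext_iff]
    rw [hset, ← Finset.prod_const]
    refine Finset.prod_congr rfl fun i hi => ?_
    simp only [Finset.mem_filter, Finset.mem_univ, true_and] at hi
    exact congrArg x hi.symm
  have hR : (∏ b ∈ Finset.univ.filter (fun b : Fin g → Fq => b ≠ 0),
      X b ^ (Finset.univ.filter
        (fun i : Fin n => ∀ j, b j ≠ 0 → (u j : Fin n → Fq) i = b j)).card)
      = ∏ i : Fin n, x (fun j => (u j : Fin n → Fq) i) := by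
    have step1 : ∀ b : Fin g → Fq,
        X b ^ (Finset.univ.filter
          (fun i : Fin n => ∀ j, b j ≠ 0 → (u j : Fin n → Fq) i = b j)).card
        = ∏ i : Fin n,
            (if ∀ j, b j ≠ 0 → (u j : Fin n → Fq) i = b j then X b else 1) := by
      intro b
      rw [← Finset.prod_const, Finset.prod_filter]
    simp_rw [step1]
    rw [Finset.prod_comm]
    refine Finset.prod_congr rfl fun i _ => ?_
    rw [← main (fun j => (u j : Fin n → Fq) i), ← Finset.prod_filter,
      Finset.filter_filter]
  rw [hL, hR]
end

section
/- Let k ≥ 2 be an integer, let C be a linear code of length n over Z_k (a submodule of (Z_k)^n), let g be a positive integer, let A be a commutative ring, and let X be a family of elements of A indexed by pairs (K, L) with K ∈ ([g] choose p), L ∈ (Z_k\{0})^p, 1 ≤ p ≤ g. Define x : (Z_k)^g → A by x_0 := 1 and, for a ≠ 0, x_a := ∏_{K ⊆ Vsupp(a), K ≠ ∅} X_{K, a_K}. Then W_C^{(g)}(x) = I_C^{(g)}(X). -/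
open scoped Classical

/-- **Theorem (WeightInter (1))**, over `Z_k` (`k ≥ 2`): substituting `x 0 := 1`
and, for `a ≠ 0`, `x a := ∏_{∅ ≠ K ⊆ Vsupp(a)} X_{K, a_K}` into the weight
enumerator gives the intersection enumerator.  Here `X_{K, a_K}` is encoded as `X`
applied to the vector agreeing with `a` on `K` and vanishing elsewhere. -/
theorem weight_eq_intersection_Zk
    (k : ℕ) (hk : 2 ≤ k) [NeZero k]
    {A : Type*} [CommRing A]
    {n g : ℕ} (hg : 0 < g)
    (C : Submodule (ZMod k) (Fin n → ZMod k))
    (X : (Fin g → ZMod k) → A)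
    (x : (Fin g → ZMod k) → A)
    (hx0 : x 0 = 1)
    (hx : ∀ a : Fin g → ZMod k, a ≠ 0 →
      x a = ∏ K ∈ ((Finset.univ.filter (fun i : Fin g => a i ≠ 0)).powerset).erase ∅,
              X (fun i => if i ∈ K then a i else 0)) :
    WEnum C g x = IEnum C g X := by
  unfold WEnum IEnum
  refine Finset.sum_congr rfl fun u _ => ?_
  set v : Fin n → Fin g → ZMod k := fun i j => (u j : Fin n → ZMod k) i with hv
  -- key pointwise identity
  have key : ∀ c : Fin g → ZMod k,
      x c = ∏ b ∈ Finset.univ.filter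
          (fun b : Fin g → ZMod k => b ≠ 0 ∧ ∀ j, b j ≠ 0 → c j = b j), X b := by
    intro c
    by_cases hc : c = 0
    · subst hc
      have hempty : (Finset.univ.filter
          (fun b : Fin g → ZMod k => b ≠ 0 ∧ ∀ j, b j ≠ 0 → (0 : Fin g → ZMod k) j = b j))
          = ∅ := by
        ext b
        simp only [Finset.mem_filter, Finset.mem_univ, true_and, Finset.notMem_empty,
          iff_false, not_and]
        intro hb hcomp
        exact hb (funext fun j => by
          by_cases h : b j = 0
          · exact h
          · exact absurd ((hcomp j h).symm) h)
      rw [hempty, Finset.prod_empty, hx0]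
    · rw [hx c hc]
      refine Finset.prod_nbij' (fun K => fun i => if i ∈ K then c i else 0)
        (fun b => Finset.univ.filter (fun j => b j ≠ 0)) ?_ ?_ ?_ ?_ ?_
      · intro K hK
        simp only [Finset.mem_erase, Finset.mem_powerset] at hK
        obtain ⟨hKne, hKsub⟩ := hK
        simp only [Finset.mem_filter, Finset.mem_univ, true_and]
        constructor
        · -- nonzero
          obtain ⟨j, hj⟩ := Finset.nonempty_iff_ne_empty.mpr hKne
          intro h0
          have := congrFun h0 j
          simp only [hj, if_true] at this
          have hcj : c j ≠ 0 := by
            have := hKsub hj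
            simpa using this
          exact hcj this
        · intro j hj
          by_cases h : j ∈ K
          · simp [h]
          · simp [h] at hj
      · intro b hb
        simp only [Finset.mem_filter, Finset.mem_univ, true_and] at hb
        obtain ⟨hb0, hcomp⟩ := hb
        simp only [Finset.mem_erase, Finset.mem_powerset]
        constructor
        · intro h
          apply hb0
          funext j
          by_contra hj
          have : j ∈ (∅ : Finset (Fin g)) := h ▸ (by simpa using hj)
          simpa using this
        · intro j hj
          simp only [Finset.mem_filter, Finset.mem_univ, true_and] at hj ⊢
          rw [← hcomp j hj] at hj
          exact hj
      · intro K hK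
        simp only [Finset.mem_erase, Finset.mem_powerset] at hK
        obtain ⟨hKne, hKsub⟩ := hK
        ext j
        simp only [Finset.mem_filter, Finset.mem_univ, true_and]
        constructor
        · intro h
          by_contra hj
          simp [hj] at h
        · intro hj
          have hcj : c j ≠ 0 := by simpa using hKsub hj
          simp [hj, hcj]
      · intro b hb
        simp only [Finset.mem_filter, Finset.mem_univ, true_and] at hb
        obtain ⟨hb0, hcomp⟩ := hb
        funext j
        show (if j ∈ Finset.univ.filter (fun j => b j ≠ 0) then c j else 0) = b j
        by_cases h : b j = 0
        · rw [if_neg (by simp [h]), h]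
        · rw [if_pos (by simp [h])]
          exact hcomp j h
      · intro K _
        rfl
  have hL : (∏ a : Fin g → ZMod k,
      x a ^ (Finset.univ.filter
        (fun i : Fin n => ∀ j, (u j : Fin n → ZMod k) i = a j)).card)
      = ∏ i : Fin n, x (v i) := by
    rw [← Finset.prod_fiberwise_of_maps_to (g := v) (t := Finset.univ)
      (fun i _ => Finset.mem_univ (v i)) (fun i => x (v i))]
    refine Finset.prod_congr rfl fun a _ => ?_
    have hfilt : (Finset.univ.filter
        (fun i : Fin n => ∀ j, (u j : Fin n → ZMod k) i = a j))
        = Finset.univ.filter (fun i => v i = a) := by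
      ext i
      simp [hv, funext_iff]
    rw [hfilt]
    calc x a ^ (Finset.univ.filter (fun i => v i = a)).card
        = ∏ _i ∈ Finset.univ.filter (fun i => v i = a), x a :=
          (Finset.prod_const _).symm
      _ = ∏ i ∈ Finset.univ.filter (fun i => v i = a), x (v i) :=
          Finset.prod_congr rfl fun i hi => by
            rw [(Finset.mem_filter.mp hi).2]
  have hR : (∏ b ∈ Finset.univ.filter (fun b : Fin g → ZMod k => b ≠ 0),
      X b ^ (Finset.univ.filter
        (fun i : Fin n => ∀ j, b j ≠ 0 → (u j : Fin n → ZMod k) i = b j)).card)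
      = ∏ i : Fin n, x (v i) := by
    calc (∏ b ∈ Finset.univ.filter (fun b : Fin g → ZMod k => b ≠ 0),
        X b ^ (Finset.univ.filter
          (fun i : Fin n => ∀ j, b j ≠ 0 → (u j : Fin n → ZMod k) i = b j)).card)
        = ∏ b ∈ Finset.univ.filter (fun b : Fin g → ZMod k => b ≠ 0),
            ∏ i : Fin n,
              (if ∀ j, b j ≠ 0 → (u j : Fin n → ZMod k) i = b j then X b else 1) := by
          refine Finset.prod_congr rfl fun b _ => ?_
          rw [← Finset.prod_filter, Finset.prod_const]
      _ = ∏ i : Fin n, ∏ b ∈ Finset.univ.filter (fun b : Fin g → ZMod k => b ≠ 0),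
              (if ∀ j, b j ≠ 0 → (u j : Fin n → ZMod k) i = b j then X b else 1) :=
          Finset.prod_comm
      _ = ∏ i : Fin n, x (v i) := by
          refine Finset.prod_congr rfl fun i _ => ?_
          rw [← Finset.prod_filter, Finset.filter_filter]
          exact (key (v i)).symm
  convert hL.trans hR.symm using 2 <;> congr!
end

section
/- Let q be a prime power, let C be a linear code of length n over F_q, let g be a positive integer, let F be a field, and let x : F_q^g → F be a family with x_b ≠ 0 for all b ∈ F_q^g. For 1 ≤ p ≤ g, K ∈ ([g] choose p) and L ∈ (F_q\{0})^p define X_{K,L} := ∏_{K' ⊆ K} x_{L_{K'}}^{(-1)^{|K| - |K'|}}, the product over all subtuples K' of K including the empty tuple. Then x_0^n · I_C^{(g)}(X) = W_C^{(g)}(x). -/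
open scoped Classical

open Finset

lemma prod_zpow_eq_zpow_sum₀ {G₀ : Type*} [CommGroupWithZero G₀] {a : G₀} (ha : a ≠ 0)
    {ι : Type*} (s : Finset ι) (f : ι → ℤ) :
    ∏ i ∈ s, a ^ f i = a ^ (∑ i ∈ s, f i) := by
  induction s using Finset.cons_induction with
  | empty => simp
  | cons i s hi ih => rw [Finset.prod_cons, Finset.sum_cons, ih, zpow_add₀ ha]

lemma sum_superset_neg_one {α : Type*} [DecidableEq α] (T K' : Finset α) (hK : K' ⊆ T) :
    ∑ S ∈ T.powerset.filter (fun S => K' ⊆ S), (-1 : ℤ) ^ (S.card - K'.card)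
      = if K' = T then 1 else 0 := by
  rw [show (∑ S ∈ T.powerset.filter (fun S => K' ⊆ S), (-1 : ℤ) ^ (S.card - K'.card))
      = ∑ U ∈ (T \ K').powerset, (-1 : ℤ) ^ U.card from
    Finset.sum_nbij' (fun S => S \ K') (fun U => K' ∪ U) ?_ ?_ ?_ ?_ ?_,
    Finset.sum_powerset_neg_one_pow_card]
  · congr 1
    simp only [eq_iff_iff, Finset.sdiff_eq_empty_iff_subset]
    exact ⟨fun h => subset_antisymm hK h, fun h => h ▸ Finset.Subset.refl _⟩
  · intro S hS
    simp only [mem_filter, mem_powerset] at hS ⊢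
    exact sdiff_subset_sdiff hS.1 (Finset.Subset.refl _)
  · intro U hU
    simp only [mem_powerset] at hU
    simp only [mem_filter, mem_powerset]
    exact ⟨union_subset hK (hU.trans sdiff_subset), subset_union_left⟩
  · intro S hS
    simp only [mem_filter, mem_powerset] at hS
    exact Finset.union_sdiff_of_subset hS.2
  · intro U hU
    simp only [mem_powerset] at hU
    exact Finset.union_sdiff_cancel_left (Finset.disjoint_sdiff.mono_right hU)
  · intro S hS
    simp only [mem_filter, mem_powerset] at hS
    rw [Finset.card_sdiff_of_subset hS.2]

lemma key_pointwise
    {Fq : Type*} [Field Fq] [Fintype Fq] {F : Type*} [Field F] {g : ℕ}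
    (x : (Fin g → Fq) → F) (hx : ∀ b, x b ≠ 0)
    (X : (Fin g → Fq) → F)
    (hX : ∀ b : Fin g → Fq, b ≠ 0 →
      X b = ∏ K' ∈ (Finset.univ.filter (fun i : Fin g => b i ≠ 0)).powerset,
        x (fun i => if i ∈ K' then b i else 0)
          ^ ((-1 : ℤ) ^ ((Finset.univ.filter (fun i : Fin g => b i ≠ 0)).card - K'.card)))
    (a : Fin g → Fq) :
    x 0 * ∏ b ∈ Finset.univ.filter
        (fun b : Fin g → Fq => b ≠ 0 ∧ ∀ j, b j ≠ 0 → a j = b j), X b = x a := by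
  set T : Finset (Fin g) := Finset.univ.filter (fun i => a i ≠ 0) with hT
  have hmemT : ∀ i, i ∈ T ↔ a i ≠ 0 := by intro i; simp [hT]
  set r : Finset (Fin g) → (Fin g → Fq) := fun S => (fun i => if i ∈ S then a i else 0) with hr
  -- reindex over nonempty subsets of T
  have step1 : (∏ b ∈ Finset.univ.filter
        (fun b : Fin g → Fq => b ≠ 0 ∧ ∀ j, b j ≠ 0 → a j = b j), X b)
      = ∏ S ∈ T.powerset.erase ∅, X (r S) := by
    have hleft : ∀ b ∈ Finset.univ.filter
        (fun b : Fin g → Fq => b ≠ 0 ∧ ∀ j, b j ≠ 0 → a j = b j),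
        r (Finset.univ.filter (fun i => b i ≠ 0)) = b := by
      intro b hb
      simp only [mem_filter, mem_univ, true_and] at hb
      funext i
      simp only [hr, mem_filter, mem_univ, true_and]
      by_cases hbi : b i ≠ 0
      · simp [hbi, hb.2 i hbi]
      · simp at hbi; simp [hbi]
    refine Finset.prod_nbij' (fun b => Finset.univ.filter (fun i => b i ≠ 0))
      (fun S => r S) ?_ ?_ hleft ?_ ?_
    · intro b hb
      simp only [mem_filter, mem_univ, true_and] at hb
      simp only [mem_erase, mem_powerset]
      constructor
      · intro h
        apply hb.1
        funext i
        by_contra hbi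
        have : i ∈ Finset.univ.filter (fun i => b i ≠ 0) := by simpa using hbi
        simp [h] at this
      · intro i hi
        simp only [mem_filter, mem_univ, true_and] at hi
        rw [hmemT, hb.2 i hi]
        exact hi
    · intro S hS
      simp only [mem_erase, mem_powerset] at hS
      simp only [mem_filter, mem_univ, true_and]
      constructor
      · intro h
        obtain ⟨i, hi⟩ := Finset.nonempty_iff_ne_empty.mpr hS.1
        have : r S i = a i := by simp [hr, hi]
        have hai : a i ≠ 0 := (hmemT i).mp (hS.2 hi)
        exact hai (by rw [← this, h]; rfl)
      · intro j hj
        simp only [hr] at hj ⊢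
        by_cases hjS : j ∈ S
        · simp [hjS]
        · simp [hjS] at hj
    · intro S hS
      simp only [mem_erase, mem_powerset] at hS
      ext i
      simp only [mem_filter, mem_univ, true_and, hr]
      by_cases hiS : i ∈ S
      · simp [hiS, (hmemT i).mp (hS.2 hiS)]
      · simp [hiS]
    · intro b hb
      rw [hleft b hb]
  rw [step1]
  -- expand X via hX; note supp (r S) = S for S ⊆ T
  have hsupp : ∀ S ∈ T.powerset.erase ∅,
      Finset.univ.filter (fun i => r S i ≠ 0) = S := by
    intro S hS
    simp only [mem_erase, mem_powerset] at hS
    ext i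
    simp only [mem_filter, mem_univ, true_and, hr]
    by_cases hiS : i ∈ S
    · simp [hiS, (hmemT i).mp (hS.2 hiS)]
    · simp [hiS]
  have step2 : (∏ S ∈ T.powerset.erase ∅, X (r S))
      = ∏ S ∈ T.powerset.erase ∅, ∏ K' ∈ S.powerset,
          x (r K') ^ ((-1 : ℤ) ^ (S.card - K'.card)) := by
    refine Finset.prod_congr rfl fun S hS => ?_
    have hne : r S ≠ 0 := by
      simp only [mem_erase, mem_powerset] at hS
      obtain ⟨i, hi⟩ := Finset.nonempty_iff_ne_empty.mpr hS.1
      intro h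
      have : r S i = 0 := by rw [h]; rfl
      simp only [hr, hi, if_true] at this
      exact (hmemT i).mp (hS.2 hi) this
    rw [hX _ hne, hsupp S hS]
    refine Finset.prod_congr rfl fun K' hK' => ?_
    simp only [mem_powerset] at hK'
    have : (fun i => if i ∈ K' then r S i else 0) = r K' := by
      funext i
      simp only [hr]
      by_cases hiK : i ∈ K'
      · simp [hiK, hK' hiK]
      · simp [hiK]
    rw [this]
  rw [step2]
  -- swap the two products
  rw [Finset.prod_comm' (t' := T.powerset)
    (s' := fun K' => (T.powerset.erase ∅).filter (fun S => K' ⊆ S)) (by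
      intro S K'
      simp only [mem_erase, mem_powerset, mem_filter]
      tauto)]
  -- collapse inner products of zpows
  have step4 : ∀ K' ∈ T.powerset,
      (∏ S ∈ (T.powerset.erase ∅).filter (fun S => K' ⊆ S),
        x (r K') ^ ((-1 : ℤ) ^ (S.card - K'.card)))
      = x (r K') ^ ((if K' = T then 1 else 0) - (if K' = ∅ then 1 else 0) : ℤ) := by
    intro K' hK'
    simp only [mem_powerset] at hK'
    rw [prod_zpow_eq_zpow_sum₀ (hx _)]
    congr 1
    have hfe : (T.powerset.erase ∅).filter (fun S => K' ⊆ S)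
        = (T.powerset.filter (fun S => K' ⊆ S)).erase ∅ := by
      ext S; simp only [mem_erase, mem_filter, mem_powerset]; tauto
    rw [hfe]
    by_cases h0 : K' = ∅
    · have hmem : (∅ : Finset (Fin g)) ∈ T.powerset.filter (fun S => K' ⊆ S) := by
        simp [h0]
      subst h0
      have h1 := Finset.add_sum_erase _ (fun S => (-1 : ℤ) ^ (S.card - (∅ : Finset (Fin g)).card)) hmem
      have hsum := sum_superset_neg_one T ∅ hK'
      simp only [Finset.card_empty, Nat.sub_zero, pow_zero] at h1 hsum ⊢
      rw [← hsum, ← h1]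
      simp
    · have hmem : (∅ : Finset (Fin g)) ∉ T.powerset.filter (fun S => K' ⊆ S) := by
        simp only [mem_filter, mem_powerset, Finset.subset_empty]
        tauto
      rw [Finset.erase_eq_of_notMem hmem, sum_superset_neg_one T K' hK', if_neg h0]
      ring
  rw [Finset.prod_congr rfl step4]
  have hrT : r T = a := by
    funext i
    simp only [hr]
    by_cases hiT : i ∈ T
    · simp [hiT]
    · rw [if_neg hiT]
      have := (hmemT i).not.mp hiT
      push_neg at this
      exact this.symm
  have hr0 : r ∅ = 0 := by funext i; simp [hr]
  have key : ∀ K' ∈ T.powerset,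
      x (r K') ^ ((if K' = T then 1 else 0) - (if K' = ∅ then 1 else 0) : ℤ)
      = (if K' = T then x a else 1) / (if K' = ∅ then x 0 else 1) := by
    intro K' _
    rw [zpow_sub₀ (hx _)]
    congr 1
    · by_cases h : K' = T
      · simp [h, hrT]
      · simp [h]
    · by_cases h : K' = ∅
      · simp [h, hr0]
      · simp [h]
  rw [Finset.prod_congr rfl key, Finset.prod_div_distrib,
    Finset.prod_ite_eq' T.powerset T (fun _ => x a),
    Finset.prod_ite_eq' T.powerset ∅ (fun _ => x 0),
    if_pos (Finset.mem_powerset_self T), if_pos (by simp)]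
  rw [mul_comm, div_mul_cancel₀ _ (hx 0)]

/-- **Theorem (WeightInter (2))**, over a finite field `F_q` (an arbitrary finite
field, since `q` ranges over all prime powers).  For a nonzero vector `b`
(encoding the pair `(K, L)` with `K = Vsupp(b)` and `L` the nonzero values of `b`),
`X b := ∏_{K' ⊆ K} x_{L_{K'}}^{(-1)^{|K| - |K'|}}`, where `L_{K'}` is the vector
agreeing with `b` on `K'` and vanishing elsewhere (`L_∅ = 0`).  Then
`x_0^n * I_C^{(g)}(X) = W_C^{(g)}(x)`. -/
theorem intersection_eq_weight_Fq
    {Fq : Type*} [Field Fq] [Fintype Fq]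
    {F : Type*} [Field F]
    {n g : ℕ} (hg : 0 < g)
    (C : Submodule Fq (Fin n → Fq))
    (x : (Fin g → Fq) → F) (hx : ∀ b, x b ≠ 0)
    (X : (Fin g → Fq) → F)
    (hX : ∀ b : Fin g → Fq, b ≠ 0 →
      X b = ∏ K' ∈ (Finset.univ.filter (fun i : Fin g => b i ≠ 0)).powerset,
        x (fun i => if i ∈ K' then b i else 0)
          ^ ((-1 : ℤ) ^ ((Finset.univ.filter (fun i : Fin g => b i ≠ 0)).card - K'.card))) :
    x 0 ^ n * IEnum C g X = WEnum C g x := by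
  unfold WEnum IEnum
  rw [Finset.mul_sum]
  refine Finset.sum_congr rfl fun u _ => ?_
  set k : Fin n → (Fin g → Fq) := fun i j => (u j : Fin n → Fq) i with hk
  have lhs : x 0 ^ n * ∏ b ∈ Finset.univ.filter (fun b : Fin g → Fq => b ≠ 0),
      X b ^ (Finset.univ.filter
        (fun i : Fin n => ∀ j, b j ≠ 0 → (u j : Fin n → Fq) i = b j)).card
      = ∏ i : Fin n, x (k i) := by
    have e1 : ∀ b ∈ Finset.univ.filter (fun b : Fin g → Fq => b ≠ 0),
        X b ^ (Finset.univ.filter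
          (fun i : Fin n => ∀ j, b j ≠ 0 → (u j : Fin n → Fq) i = b j)).card
        = ∏ i ∈ Finset.univ.filter
            (fun i : Fin n => ∀ j, b j ≠ 0 → (u j : Fin n → Fq) i = b j), X b :=
      fun b _ => (Finset.prod_const _).symm
    rw [Finset.prod_congr rfl e1,
      Finset.prod_comm' (t' := (Finset.univ : Finset (Fin n)))
        (s' := fun i => Finset.univ.filter
          (fun b : Fin g → Fq => b ≠ 0 ∧ ∀ j, b j ≠ 0 → k i j = b j)) (by
        intro b i
        simp only [Finset.mem_filter, Finset.mem_univ, true_and, and_true, hk]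
        try tauto),
      show (x 0 ^ n : F) = ∏ _i : Fin n, x 0 by simp,
      ← Finset.prod_mul_distrib]
    exact Finset.prod_congr rfl fun i _ =>
      key_pointwise x hx X hX (k i)
  rw [lhs]
  -- right-hand side
  have e2 : ∀ a : Fin g → Fq,
      Finset.univ.filter (fun i : Fin n => ∀ j, (u j : Fin n → Fq) i = a j)
        = Finset.univ.filter (fun i : Fin n => k i = a) := by
    intro a
    apply Finset.filter_congr
    intro i _
    simp [hk, funext_iff]
  have e3 : ∀ a ∈ (Finset.univ : Finset (Fin g → Fq)),
      x a ^ (Finset.univ.filter (fun i : Fin n => ∀ j, (u j : Fin n → Fq) i = a j)).card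
      = ∏ i ∈ Finset.univ.filter (fun i : Fin n => k i = a), x a := by
    intro a _
    rw [e2 a, Finset.prod_const]
  rw [Finset.prod_congr rfl e3]
  rw [Finset.prod_fiberwise_of_maps_to' (fun i _ => Finset.mem_univ (k i)) x]
end

section
/- Let k ≥ 2 be an integer, let C be a linear code of length n over Z_k, let g be a positive integer, let F be a field, and let x : (Z_k)^g → F be a family with x_b ≠ 0 for all b ∈ (Z_k)^g. For 1 ≤ p ≤ g, K ∈ ([g] choose p) and L ∈ (Z_k\{0})^p define X_{K,L} := ∏_{K' ⊆ K} x_{L_{K'}}^{(-1)^{|K| - |K'|}}, the product over all subtuples K' of K including the empty tuple. Then x_0^n · I_C^{(g)}(X) = W_C^{(g)}(x). -/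
open scoped Classical

open Finset in
private lemma zpow_prod_sum {F : Type*} [Field F] {a : F} (ha : a ≠ 0) {ι : Type*}
    (s : Finset ι) (e : ι → ℤ) : ∏ i ∈ s, a ^ e i = a ^ (∑ i ∈ s, e i) := by
  induction s using Finset.cons_induction with
  | empty => simp
  | cons i s hi ih => rw [Finset.sum_cons, Finset.prod_cons, zpow_add₀ ha, ih]

open Finset in
private lemma alt_sum {ι : Type*} [DecidableEq ι] (T K : Finset ι) (hK : K ⊆ T) :
    ∑ S ∈ T.powerset.filter (fun S => K ⊆ S), (-1 : ℤ) ^ (S.card - K.card)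
      = if K = T then 1 else 0 := by
  have h : ∑ S ∈ T.powerset.filter (fun S => K ⊆ S), (-1 : ℤ) ^ (S.card - K.card)
      = ∑ U ∈ (T \ K).powerset, (-1 : ℤ) ^ U.card := by
    refine Finset.sum_nbij' (fun S => S \ K) (fun U => U ∪ K) ?_ ?_ ?_ ?_ ?_
    · intro S hS
      simp only [mem_filter, mem_powerset] at hS ⊢
      exact sdiff_subset_sdiff hS.1 (le_refl K)
    · intro U hU
      simp only [mem_powerset] at hU
      simp only [mem_filter, mem_powerset]
      exact ⟨union_subset (hU.trans (sdiff_subset)) hK, subset_union_right⟩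
    · intro S hS
      simp only [mem_filter, mem_powerset] at hS
      exact sdiff_union_of_subset hS.2
    · intro U hU
      simp only [mem_powerset] at hU
      show (U ∪ K) \ K = U
      rw [union_sdiff_right, sdiff_eq_self_of_disjoint]
      exact Finset.disjoint_of_subset_left hU sdiff_disjoint
    · intro S hS
      simp only [mem_filter, mem_powerset] at hS
      rw [card_sdiff_of_subset hS.2]
  rw [h, Finset.sum_powerset_neg_one_pow_card]
  congr 1
  rw [sdiff_eq_empty_iff_subset, eq_iff_iff]
  constructor
  · intro h'; exact (Finset.Subset.antisymm hK h').symm ▸ rfl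
  · intro h'; exact h' ▸ Finset.Subset.refl T

open Finset in
private lemma mobius {F : Type*} [Field F] {ι : Type*} [DecidableEq ι]
    (f : Finset ι → F) (hf : ∀ S, f S ≠ 0) (T : Finset ι) :
    ∏ S ∈ T.powerset, ∏ K ∈ S.powerset, f K ^ ((-1:ℤ) ^ (S.card - K.card)) = f T := by
  rw [Finset.prod_comm' (t' := T.powerset)
    (s' := fun K => T.powerset.filter (fun S => K ⊆ S)) (fun S K => by
      simp only [mem_filter, mem_powerset]
      constructor
      · rintro ⟨h1, h2⟩; exact ⟨⟨h1, h2⟩, h2.trans h1⟩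
      · rintro ⟨⟨h1, h2⟩, _⟩; exact ⟨h1, h2⟩)]
  have : ∀ K ∈ T.powerset,
      ∏ S ∈ T.powerset.filter (fun S => K ⊆ S), f K ^ ((-1:ℤ) ^ (S.card - K.card))
        = f K ^ (if K = T then (1:ℤ) else 0) := by
    intro K hK
    rw [zpow_prod_sum (hf K), alt_sum T K (mem_powerset.mp hK)]
  rw [Finset.prod_congr rfl this]
  rw [Finset.prod_eq_single T (fun K _ hne => by rw [if_neg hne, zpow_zero])
    (fun h => absurd (mem_powerset_self T) h)]
  simp

open Finset in
private lemma key {k g : ℕ} [NeZero k] {F : Type*} [Field F]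
    (x : (Fin g → ZMod k) → F) (hx : ∀ b, x b ≠ 0)
    (X : (Fin g → ZMod k) → F)
    (hX : ∀ b : Fin g → ZMod k, b ≠ 0 →
      X b = ∏ K' ∈ (Finset.univ.filter (fun i : Fin g => b i ≠ 0)).powerset,
        x (fun i => if i ∈ K' then b i else 0)
          ^ ((-1 : ℤ) ^ ((Finset.univ.filter (fun i : Fin g => b i ≠ 0)).card - K'.card)))
    (a : Fin g → ZMod k) :
    x 0 * ∏ b ∈ Finset.univ.filter (fun b : Fin g → ZMod k => b ≠ 0),
      (if (∀ j, b j ≠ 0 → a j = b j) then X b else 1) = x a := by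
  set T : Finset (Fin g) := Finset.univ.filter (fun j => a j ≠ 0) with hT
  set m : Finset (Fin g) → (Fin g → ZMod k) := fun S j => if j ∈ S then a j else 0 with hm
  have hsupp : ∀ S, S ⊆ T → Finset.univ.filter (fun j => m S j ≠ 0) = S := by
    intro S hS
    ext j
    simp only [mem_filter, mem_univ, true_and, hm]
    constructor
    · intro hj; by_contra hj'; simp [hj'] at hj
    · intro hj
      have : a j ≠ 0 := by have := hS hj; rw [hT, mem_filter] at this; exact this.2
      simp [hj, this]
  have hmT : m T = a := by
    funext j
    by_cases hj : a j = 0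
    · simp [hm, hT, hj]
    · simp [hm, hT, hj]
  have hm0 : m ∅ = 0 := by funext j; simp [hm]
  have hG : x 0 = ∏ K' ∈ (∅ : Finset (Fin g)).powerset,
      x (m K') ^ ((-1:ℤ) ^ ((∅ : Finset (Fin g)).card - K'.card)) := by
    simp [hm0]
  -- step 1: ite product to filtered product
  rw [← Finset.prod_filter, Finset.filter_filter]
  -- step 2: reindex by subsets of T
  have h2 : ∏ S ∈ T.powerset.erase ∅, X (m S)
      = ∏ b ∈ Finset.univ.filter
      (fun b : Fin g → ZMod k => b ≠ 0 ∧ ∀ j, b j ≠ 0 → a j = b j), X b := by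
    refine Finset.prod_nbij' (fun S => m S)
      (fun b => Finset.univ.filter (fun j => b j ≠ 0)) ?_ ?_ ?_ ?_ ?_
    · -- m S ∈ filter set
      intro S hS
      simp only [mem_erase, mem_powerset] at hS
      simp only [mem_filter, mem_univ, true_and]
      constructor
      · intro h0
        obtain ⟨j, hj⟩ := Finset.nonempty_iff_ne_empty.mpr hS.1
        have haj : a j ≠ 0 := by have := hS.2 hj; rw [hT, mem_filter] at this; exact this.2
        have : m S j = 0 := by rw [h0]; rfl
        simp [hm, hj, haj] at this
      · intro j hj
        simp only [hm] at hj ⊢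
        by_cases hjS : j ∈ S
        · simp [hjS]
        · simp [hjS] at hj
    · -- supp b ∈ erase
      intro b hb
      simp only [mem_filter, mem_univ, true_and] at hb
      obtain ⟨hb0, hcomp⟩ := hb
      simp only [mem_erase, mem_powerset]
      constructor
      · intro hemp
        apply hb0
        funext j
        show b j = 0
        by_contra hj
        have : j ∈ Finset.univ.filter (fun j => b j ≠ 0) := by simp [hj]
        rw [hemp] at this; exact absurd this (Finset.notMem_empty j)
      · intro j hj
        simp only [mem_filter, mem_univ, true_and] at hj
        rw [hT, mem_filter]
        exact ⟨mem_univ j, (hcomp j hj) ▸ hj⟩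
    · -- supp (m S) = S
      intro S hS
      simp only [mem_erase, mem_powerset] at hS
      exact hsupp S hS.2
    · -- m (supp b) = b
      intro b hb
      simp only [mem_filter, mem_univ, true_and] at hb
      funext j
      by_cases hj : b j = 0
      · simp [hm, hj]
      · have : j ∈ Finset.univ.filter (fun j => b j ≠ 0) := by simp [hj]
        simp only [hm, this, if_pos]
        exact hb.2 j hj
    · intro S hS; rfl
  rw [← h2]
  -- step 3: expand X (m S)
  have h3 : ∀ S ∈ T.powerset.erase ∅,
      X (m S) = ∏ K' ∈ S.powerset, x (m K') ^ ((-1:ℤ) ^ (S.card - K'.card)) := by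
    intro S hS
    simp only [mem_erase, mem_powerset] at hS
    have hne : m S ≠ 0 := by
      intro h0
      apply hS.1
      by_contra hemp
      obtain ⟨j, hj⟩ := Finset.nonempty_iff_ne_empty.mpr hemp
      have haj : a j ≠ 0 := by have := hS.2 hj; rw [hT, mem_filter] at this; exact this.2
      have : m S j = 0 := by rw [h0]; rfl
      simp [hm, hj, haj] at this
    rw [hX (m S) hne, hsupp S hS.2]
    refine Finset.prod_congr rfl fun K' hK' => ?_
    simp only [mem_powerset] at hK'
    congr 2
    funext i
    by_cases hi : i ∈ K'
    · simp [hm, hi, hK' hi]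
    · simp [hm, hi]
  rw [Finset.prod_congr rfl h3, hG, ← hmT]
  rw [show (∅ : Finset (Fin g)) = (∅ : Finset (Fin g)) from rfl]
  rw [Finset.mul_prod_erase T.powerset
    (fun S => ∏ K' ∈ S.powerset, x (m K') ^ ((-1:ℤ) ^ (S.card - K'.card)))
    (Finset.empty_mem_powerset T)]
  exact mobius (fun K => x (m K)) (fun K => hx (m K)) T


open Finset in
private lemma main_aux {k g n : ℕ} [NeZero k] {F : Type*} [Field F]
    (x : (Fin g → ZMod k) → F) (hx : ∀ b, x b ≠ 0)
    (X : (Fin g → ZMod k) → F)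
    (hX : ∀ b : Fin g → ZMod k, b ≠ 0 →
      X b = ∏ K' ∈ (Finset.univ.filter (fun i : Fin g => b i ≠ 0)).powerset,
        x (fun i => if i ∈ K' then b i else 0)
          ^ ((-1 : ℤ) ^ ((Finset.univ.filter (fun i : Fin g => b i ≠ 0)).card - K'.card)))
    (w : Fin g → Fin n → ZMod k) :
    x 0 ^ n * ∏ b ∈ Finset.univ.filter (fun b : Fin g → ZMod k => b ≠ 0),
      X b ^ (Finset.univ.filter
        (fun i : Fin n => ∀ j, b j ≠ 0 → w j i = b j)).card
    = ∏ a : Fin g → ZMod k,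
        x a ^ (Finset.univ.filter (fun i : Fin n => ∀ j, w j i = a j)).card := by
  set v : Fin n → (Fin g → ZMod k) := fun i j => w j i with hv
  have hR : ∏ a : Fin g → ZMod k,
      x a ^ (Finset.univ.filter (fun i : Fin n => ∀ j, w j i = a j)).card
      = ∏ i : Fin n, x (v i) := by
    rw [← Finset.prod_fiberwise' (Finset.univ : Finset (Fin n)) v x]
    refine Finset.prod_congr rfl fun a _ => ?_
    rw [Finset.prod_const]
    congr 2
    ext i
    simp [hv, funext_iff]
  rw [hR]
  have hL : ∀ b : Fin g → ZMod k,
      X b ^ (Finset.univ.filter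
        (fun i : Fin n => ∀ j, b j ≠ 0 → w j i = b j)).card
      = ∏ i : Fin n, (if (∀ j, b j ≠ 0 → v i j = b j) then X b else 1) := by
    intro b
    rw [← Finset.prod_const, Finset.prod_filter]
  rw [Finset.prod_congr rfl fun b _ => hL b, Finset.prod_comm]
  rw [show x 0 ^ n = ∏ _i : Fin n, x 0 by simp]
  rw [← Finset.prod_mul_distrib]
  refine Finset.prod_congr rfl fun i _ => ?_
  exact key x hx X hX (v i)

set_option maxHeartbeats 2000000 in
open Finset in
/-- **Theorem (WeightInter (2))**, over `Z_k` (`k ≥ 2`).  For a nonzero vector `b`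
(encoding the pair `(K, L)` with `K = Vsupp(b)` and `L` the nonzero values of `b`),
`X b := ∏_{K' ⊆ K} x_{L_{K'}}^{(-1)^{|K| - |K'|}}`, where `L_{K'}` is the vector
agreeing with `b` on `K'` and vanishing elsewhere (`L_∅ = 0`).  Then
`x_0^n * I_C^{(g)}(X) = W_C^{(g)}(x)`. -/
theorem intersection_eq_weight_Zk
    (k : ℕ) (hk : 2 ≤ k) [NeZero k]
    {F : Type*} [Field F]
    {n g : ℕ} (hg : 0 < g)
    (C : Submodule (ZMod k) (Fin n → (ZMod k)))
    (x : (Fin g → (ZMod k)) → F) (hx : ∀ b, x b ≠ 0)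
    (X : (Fin g → (ZMod k)) → F)
    (hX : ∀ b : Fin g → (ZMod k), b ≠ 0 →
      X b = ∏ K' ∈ (Finset.univ.filter (fun i : Fin g => b i ≠ 0)).powerset,
        x (fun i => if i ∈ K' then b i else 0)
          ^ ((-1 : ℤ) ^ ((Finset.univ.filter (fun i : Fin g => b i ≠ 0)).card - K'.card))) :
    x 0 ^ n * IEnum C g X = WEnum C g x := by
  unfold IEnum WEnum
  rw [Finset.mul_sum]
  refine Finset.sum_congr rfl fun u _ => ?_
  convert main_aux x hx X hX (fun j => (u j : Fin n → ZMod k)) using 5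
  ext i
  simp only [Finset.mem_filter]
end

section
/- Let q be a prime power, let C be a linear code of length n over F_q, let g be a positive integer, let v ∈ F_q^n, let F be a field, and let y : F_q^{g+1} → F be a family with y_b ≠ 0 for all b ∈ F_q^{g+1}. Then 𝔍ac^{(g)}_{C,v}(y) = y_0^n · ∏_{ℓ ∈ F_q\{0}} (y_{(0,…,0,ℓ)} / y_0)^{wt_ℓ(v)} · Jac^{(g)}_{C,v}(X), where the variables X are given by: X_{(k),(ℓ)} := y_{L_{(k)}} / y_0 for k ∈ {1,…,g} and ℓ ∈ F_q\{0} (with L_{(k)} ∈ F_q^{g+1} the vector with ℓ in position k and 0 elsewhere), and X_{K,L} := ∏_{K' ⊆ K} y_{L_{K'}}^{(-1)^{|K| - |K'|}} for K ∈ ([g+1] choose p) with 2 ≤ p ≤ g+1 and L ∈ (F_q\{0})^p, the product over all subtuples K' of K including the empty tuple. -/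
open scoped Classical

/-- The `g`-th homogeneous Jacobi polynomial `𝔍ac^{(g)}_{C,v}(y)`.  The sum ranges
over all `g`-tuples of (not necessarily distinct) codewords; for
`a : Fin (g+1) → R`, the exponent of `y a` is `n_a(u_1,…,u_g,v)`, the number of
coordinates `i` with `(u_1 i, …, u_g i, v i) = a`. -/
noncomputable def JacHom {R : Type*} [CommRing R] [Fintype R] {A : Type*} [CommRing A]
    {n g : ℕ} (C : Submodule R (Fin n → R)) (v : Fin n → R)
    (y : (Fin (g+1) → R) → A) : A :=
  ∑ u : Fin g → ↥C, ∏ a : Fin (g+1) → R,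
    y a ^ (Finset.univ.filter (fun i : Fin n =>
      (∀ j : Fin g, (u j : Fin n → R) i = a j.castSucc) ∧ v i = a (Fin.last g))).card

/-- The `g`-th inhomogeneous Jacobi polynomial `Jac^{(g)}_{C,v}(X)`.  A pair `(K,L)`
with `K ∈ ([g+1] choose p)`, `L ∈ (R \ {0})^p` is encoded as the nonzero vector
`b : Fin (g+1) → R` with support `K` and values `L`; the convention
`X_{(g+1),(j)} = 1` is realised by replacing `X b` by `1` whenever the support of
`b` is contained in `{g+1}` (the last index).  The exponent of `X b` is
`n_L(u_{K_1},…,u_{K_p})` with `u_{g+1} := v`. -/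
noncomputable def JacInhom {R : Type*} [CommRing R] [Fintype R] {A : Type*} [CommRing A]
    {n g : ℕ} (C : Submodule R (Fin n → R)) (v : Fin n → R)
    (X : (Fin (g+1) → R) → A) : A :=
  ∑ u : Fin g → ↥C, ∏ b ∈ Finset.univ.filter (fun b : Fin (g+1) → R => b ≠ 0),
    (if ∀ j : Fin g, b j.castSucc = 0 then 1 else X b) ^
      (Finset.univ.filter (fun i : Fin n =>
        (∀ j : Fin g, b j.castSucc ≠ 0 → (u j : Fin n → R) i = b j.castSucc) ∧
        (b (Fin.last g) ≠ 0 → v i = b (Fin.last g)))).card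

/-!
Expanding both sides coordinatewise, a tuple `u` of codewords contributes `∏ᵢ y (wᵢ)` to the
homogeneous polynomial, where `wᵢ = (u₁ᵢ, …, u_gᵢ, vᵢ)`, and `∏ᵢ ∏_b X_b` to the inhomogeneous
one, over the nonzero restrictions `b` of `wᵢ` to subsets of its support. The substitution makes
`X` the Möbius transform of `y` on the Boolean lattice of these restrictions, so Möbius inversion
gives `y a = ∏_b X_b` over all restrictions `b` of `a`. The restrictions supported on the last
coordinate, whose variables are set to `1` in `Jac`, contribute `y (0, …, 0, a_{g+1})`, which
is the factor `y_0 · (y_{(0,…,0,ℓ)} / y_0)` for `ℓ = a_{g+1}` (or `y_0` when `a_{g+1} = 0`).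
-/
open Finset

section Moebius

variable {α G₀ : Type*} [DecidableEq α] [CommGroupWithZero G₀]

theorem zpow_sum₀ {ι : Type*} {x : G₀} (hx : x ≠ 0) (s : Finset ι) (f : ι → ℤ) :
    x ^ (∑ i ∈ s, f i) = ∏ i ∈ s, x ^ f i := by
  induction s using Finset.cons_induction with
  | empty => simp
  | cons i s hi ih => rw [sum_cons, prod_cons, zpow_add₀ hx, ih]

theorem sum_Icc_neg_one_pow_card_sub {s t : Finset α} (hst : s ⊆ t) :
    ∑ u ∈ Icc s t, (-1 : ℤ) ^ (#u - #s) = if s = t then 1 else 0 := by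
  have hdisj : ∀ r ∈ (t \ s).powerset, Disjoint s r := fun r hr =>
    disjoint_of_subset_right (mem_powerset.1 hr) disjoint_sdiff
  rw [Icc_eq_image_powerset hst, sum_image fun r hr r' hr' h => by
    simpa [union_sdiff_cancel_left (hdisj r hr), union_sdiff_cancel_left (hdisj r' hr')]
      using congrArg (· \ s) h]
  rw [sum_congr rfl fun r hr => by
      rw [card_union_of_disjoint (hdisj r hr), Nat.add_sub_cancel_left],
    sum_powerset_neg_one_pow_card]
  exact if_congr (sdiff_eq_empty_iff_subset.trans ⟨(subset_antisymm hst ·), (· ▸ subset_rfl)⟩)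
    rfl rfl

theorem prod_powerset_prod_powerset_zpow_neg_one_pow (t : Finset α) (x : Finset α → G₀)
    (hx : ∀ s ⊆ t, x s ≠ 0) :
    ∏ s ∈ t.powerset, ∏ r ∈ s.powerset, x r ^ ((-1 : ℤ) ^ (#s - #r)) = x t := by
  rw [prod_comm' (t' := t.powerset) (s' := fun r => Icc r t) fun s r => by
    simp only [mem_powerset, mem_Icc]
    exact ⟨fun ⟨hst, hrs⟩ => ⟨⟨hrs, hst⟩, hrs.trans hst⟩, fun ⟨⟨hrs, hst⟩, _⟩ => ⟨hst, hrs⟩⟩]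
  calc ∏ r ∈ t.powerset, ∏ s ∈ Icc r t, x r ^ ((-1 : ℤ) ^ (#s - #r))
      = ∏ r ∈ t.powerset, if r = t then x r else 1 := prod_congr rfl fun r hr => by
        rw [← zpow_sum₀ (hx r (mem_powerset.1 hr)),
          sum_Icc_neg_one_pow_card_sub (mem_powerset.1 hr)]
        split_ifs <;> simp
    _ = x t := by rw [prod_ite_eq', if_pos (mem_powerset_self t)]

end Moebius

section Restriction

variable {ι M G₀ : Type*} [Fintype ι] [DecidableEq ι] [Zero M] [DecidableEq M]
  [CommGroupWithZero G₀]

/-- The paper's `X_{K,L}` for the vector `b` with support `K` and values `L`. -/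
noncomputable def moebiusTransform (y : (ι → M) → G₀) (b : ι → M) : G₀ :=
  ∏ s ∈ powerset {i | b i ≠ 0}, y (s.piecewise b 0) ^ ((-1 : ℤ) ^ (#{i | b i ≠ 0} - #s))

theorem filter_ne_zero_piecewise {a : ι → M} {s : Finset ι}
    (hs : s ⊆ ({i | a i ≠ 0} : Finset ι)) :
    ({i | s.piecewise a 0 i ≠ 0} : Finset ι) = s := by
  ext i
  by_cases hi : i ∈ s
  · simpa [hi] using hs hi
  · simp [hi]

theorem piecewise_filter_ne_zero {a b : ι → M} (hb : ∀ k, b k ≠ 0 → a k = b k) :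
    ({i | b i ≠ 0} : Finset ι).piecewise a 0 = b := by
  ext k
  by_cases hk : b k = 0
  · simp [hk]
  · simp [hk, hb k hk]

theorem moebiusTransform_ite_eq (y : (ι → M) → G₀) (k : ι) {ℓ : M} (hℓ : ℓ ≠ 0) :
    moebiusTransform y (fun i => if i = k then ℓ else 0)
      = y (fun i => if i = k then ℓ else 0) / y 0 := by
  have hsupp : ({i | (if i = k then ℓ else 0) ≠ 0} : Finset ι) = {k} := by
    ext i; by_cases hi : i = k <;> simp [hi, hℓ]
  have hself : ({k} : Finset ι).piecewise (fun i => if i = k then ℓ else 0) 0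
      = fun i => if i = k then ℓ else 0 := hsupp ▸ piecewise_filter_ne_zero fun _ _ => rfl
  have hpowerset : ({k} : Finset ι).powerset = {∅, {k}} := by
    ext s; simp [subset_singleton_iff]
  rw [moebiusTransform, hsupp, hpowerset, prod_pair (singleton_ne_empty k).symm, hself]
  simp [div_eq_mul_inv, mul_comm]

theorem prod_powerset_moebiusTransform_piecewise {y : (ι → M) → G₀} (hy : ∀ b, y b ≠ 0)
    (a : ι → M) :
    ∏ s ∈ powerset ({i | a i ≠ 0} : Finset ι), moebiusTransform y (s.piecewise a 0) = y a := by
  have hrestrict : ∀ s ∈ powerset ({i | a i ≠ 0} : Finset ι),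
      moebiusTransform y (s.piecewise a 0)
        = ∏ r ∈ s.powerset, y (r.piecewise a 0) ^ ((-1 : ℤ) ^ (#s - #r)) := fun s hs => by
    rw [moebiusTransform, filter_ne_zero_piecewise (mem_powerset.1 hs)]
    exact prod_congr rfl fun r hr => by
      rw [piecewise_piecewise_of_subset_left (mem_powerset.1 hr)]
  rw [prod_congr rfl hrestrict,
    prod_powerset_prod_powerset_zpow_neg_one_pow _ _ fun s _ => hy _,
    piecewise_filter_ne_zero fun _ _ => rfl]

/-- `∀ k, b k ≠ 0 → a k = b k` says that `b` is the restriction of `a` to a subset of its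
support. -/
theorem prod_restrictions_eq_prod_powerset {β : Type*} [CommMonoid β] [Fintype M] (a : ι → M)
    (f : (ι → M) → β) :
    ∏ b with ∀ k, b k ≠ 0 → a k = b k, f b
      = ∏ s ∈ powerset ({i | a i ≠ 0} : Finset ι), f (s.piecewise a 0) := by
  refine prod_nbij' (fun b => ({i | b i ≠ 0} : Finset ι)) (fun s => s.piecewise a 0)
    (fun b hb => ?_) (fun s _ => ?_) (fun b hb => piecewise_filter_ne_zero (mem_filter.1 hb).2)
    (fun s hs => filter_ne_zero_piecewise (mem_powerset.1 hs))
    (fun b hb => by rw [piecewise_filter_ne_zero (mem_filter.1 hb).2])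
  · simp only [mem_filter, mem_univ, true_and] at hb
    simp only [mem_powerset, subset_iff, mem_filter, mem_univ, true_and]
    exact fun k hk => hb k hk ▸ hk
  · simp only [mem_filter, mem_univ, true_and]
    intro k hk
    by_cases hks : k ∈ s <;> simp_all

theorem prod_restrictions_moebiusTransform [Fintype M] {y : (ι → M) → G₀} (hy : ∀ b, y b ≠ 0)
    (a : ι → M) :
    ∏ b with ∀ k, b k ≠ 0 → a k = b k, moebiusTransform y b = y a := by
  rw [prod_restrictions_eq_prod_powerset, prod_powerset_moebiusTransform_piecewise hy]

end Restriction

theorem prod_pow_card_filter {κ ι β : Type*} [CommMonoid β] (s : Finset κ) (t : Finset ι)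
    (p : κ → ι → Prop) [∀ b i, Decidable (p b i)] (f : κ → β) :
    ∏ b ∈ s, f b ^ #{i ∈ t | p b i} = ∏ i ∈ t, ∏ b ∈ s, if p b i then f b else 1 := by
  rw [prod_comm]
  exact prod_congr rfl fun b _ => by rw [← prod_const, prod_filter]

section Jacobi

variable {M G₀ : Type*} [Zero M] [DecidableEq M] [CommGroupWithZero G₀] {g : ℕ}
  {y X : (Fin (g+1) → M) → G₀}

theorem eq_moebiusTransform_of_not_forall_castSucc_eq_zero
    (hX1 : ∀ (m : Fin g) (ℓ : M), ℓ ≠ 0 →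
      X (fun i => if i = m.castSucc then ℓ else 0)
        = y (fun i => if i = m.castSucc then ℓ else 0) / y 0)
    (hX2 : ∀ b : Fin (g+1) → M, 2 ≤ #{i | b i ≠ 0} → X b = moebiusTransform y b)
    {b : Fin (g+1) → M} (hb : ¬ ∀ j : Fin g, b j.castSucc = 0) : X b = moebiusTransform y b := by
  push Not at hb
  obtain ⟨m, hm⟩ := hb
  rcases le_or_gt 2 #{i | b i ≠ 0} with hcard | hcard
  · exact hX2 b hcard
  have hsupp : ({i | b i ≠ 0} : Finset (Fin (g+1))) = {m.castSucc} :=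
    eq_singleton_iff_unique_mem.2 ⟨by simpa using hm, fun i hi =>
      card_le_one.1 (by omega) i hi _ (by simpa using hm)⟩
  have hb : b = fun i => if i = m.castSucc then b m.castSucc else 0 := by
    rw [← piecewise_filter_ne_zero (a := b) fun _ _ => rfl, hsupp]
    ext i
    by_cases hi : i = m.castSucc <;> simp [hi]
  rw [hb, hX1 m _ hm, moebiusTransform_ite_eq _ _ hm]

theorem restriction_and_castSucc_eq_zero_iff {a b : Fin (g+1) → M} :
    ((∀ k, b k ≠ 0 → a k = b k) ∧ ∀ j : Fin g, b j.castSucc = 0) ↔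
      ∀ k, b k ≠ 0 → (if k = Fin.last g then a (Fin.last g) else 0) = b k := by
  simp only [Fin.forall_fin_succ', (Fin.castSucc_lt_last _).ne, if_false]
  constructor
  · rintro ⟨⟨-, hlast⟩, hzero⟩
    exact ⟨fun j hj => absurd (hzero j) hj, hlast⟩
  · rintro ⟨hzero, hlast⟩
    have hzero' : ∀ j : Fin g, b j.castSucc = 0 := fun j => by
      by_contra hj
      exact hj (hzero j hj).symm
    exact ⟨⟨fun j hj => absurd (hzero' j) hj, hlast⟩, hzero'⟩

theorem eq_mul_prod_restrictions [Fintype M] (hy : ∀ b, y b ≠ 0)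
    (hX1 : ∀ (m : Fin g) (ℓ : M), ℓ ≠ 0 →
      X (fun i => if i = m.castSucc then ℓ else 0)
        = y (fun i => if i = m.castSucc then ℓ else 0) / y 0)
    (hX2 : ∀ b : Fin (g+1) → M, 2 ≤ #{i | b i ≠ 0} → X b = moebiusTransform y b)
    (a : Fin (g+1) → M) :
    y a = y (fun i => if i = Fin.last g then a (Fin.last g) else 0) *
      ∏ b with b ≠ 0, if ∀ k, b k ≠ 0 → a k = b k then
        (if ∀ j : Fin g, b j.castSucc = 0 then 1 else X b) else 1 := by
  have hlast : ∏ b with (∀ k, b k ≠ 0 → a k = b k) ∧ ∀ j : Fin g, b j.castSucc = 0,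
      moebiusTransform y b = y (fun i => if i = Fin.last g then a (Fin.last g) else 0) := by
    convert prod_restrictions_moebiusTransform hy _ using 2
    ext b
    simp only [mem_filter, mem_univ, true_and, restriction_and_castSucc_eq_zero_iff]
  have hrest : ∏ b with (∀ k, b k ≠ 0 → a k = b k) ∧ ¬ ∀ j : Fin g, b j.castSucc = 0,
        moebiusTransform y b
      = ∏ b with b ≠ 0, if ∀ k, b k ≠ 0 → a k = b k then
          (if ∀ j : Fin g, b j.castSucc = 0 then 1 else X b) else 1 := by
    have hite : ∀ b ∈ ({b | b ≠ 0} : Finset (Fin (g+1) → M)),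
        (if ∀ k, b k ≠ 0 → a k = b k then
          (if ∀ j : Fin g, b j.castSucc = 0 then 1 else X b) else 1)
        = if (∀ k, b k ≠ 0 → a k = b k) ∧ ¬ ∀ j : Fin g, b j.castSucc = 0 then X b else 1 :=
      fun b _ => by split_ifs <;> simp_all
    rw [prod_congr rfl hite, ← prod_filter, filter_filter]
    refine prod_congr (filter_congr fun b _ => ?_) fun b hb =>
      (eq_moebiusTransform_of_not_forall_castSucc_eq_zero hX1 hX2 (mem_filter.1 hb).2.2.2).symm
    refine ⟨fun h => ⟨?_, h⟩, fun h => h.2⟩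
    rintro rfl
    exact h.2 fun _ => rfl
  calc y a = ∏ b with ∀ k, b k ≠ 0 → a k = b k, moebiusTransform y b := by
        convert (prod_restrictions_moebiusTransform hy a).symm
    _ = _ := by
      rw [← prod_filter_mul_prod_filter_not _ fun b => ∀ j : Fin g, b j.castSucc = 0,
        filter_filter, filter_filter, hlast, hrest]

end Jacobi

theorem homogeneous_eq_inhomogeneous_Fq_general
    {Fq : Type*} [Field Fq] [Fintype Fq]
    {F : Type*} [Field F]
    {n g : ℕ}
    (C : Submodule Fq (Fin n → Fq)) (v : Fin n → Fq)
    (y : (Fin (g+1) → Fq) → F) (hy : ∀ b, y b ≠ 0)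
    (X : (Fin (g+1) → Fq) → F)
    (hX1 : ∀ (m : Fin g) (ℓ : Fq), ℓ ≠ 0 →
      X (fun i => if i = m.castSucc then ℓ else 0)
        = y (fun i => if i = m.castSucc then ℓ else 0) / y 0)
    (hX2 : ∀ b : Fin (g+1) → Fq,
      2 ≤ (Finset.univ.filter (fun i => b i ≠ 0)).card →
      X b = ∏ K' ∈ (Finset.univ.filter (fun i => b i ≠ 0)).powerset,
        y (fun i => if i ∈ K' then b i else 0)
          ^ ((-1 : ℤ) ^ ((Finset.univ.filter (fun i => b i ≠ 0)).card - K'.card))) :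
    JacHom C v y
      = y 0 ^ n *
        (∏ ℓ ∈ Finset.univ.filter (fun ℓ : Fq => ℓ ≠ 0),
          (y (fun i => if i = Fin.last g then ℓ else 0) / y 0)
            ^ (Finset.univ.filter (fun i : Fin n => v i = ℓ)).card) *
        JacInhom C v X := by
  unfold JacHom JacInhom
  rw [mul_sum]
  refine sum_congr rfl fun u _ => ?_
  simp only [prod_pow_card_filter, ← Fin.prod_const n (y 0), ← prod_mul_distrib]
  refine prod_congr rfl fun i _ => ?_
  set a : Fin (g+1) → Fq := Fin.snoc (fun j => (u j : Fin n → Fq) i) (v i) with ha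
  have hcoord : ∀ b : Fin (g+1) → Fq,
      ((∀ j : Fin g, (u j : Fin n → Fq) i = b j.castSucc) ∧ v i = b (Fin.last g)) ↔ a = b := by
    simp [ha, funext_iff, Fin.forall_fin_succ']
  have hrestr : ∀ b : Fin (g+1) → Fq,
      ((∀ j : Fin g, b j.castSucc ≠ 0 → (u j : Fin n → Fq) i = b j.castSucc) ∧
        (b (Fin.last g) ≠ 0 → v i = b (Fin.last g))) ↔ ∀ k, b k ≠ 0 → a k = b k := by
    simp [ha, Fin.forall_fin_succ']
  simp only [hcoord, hrestr, prod_ite_eq, mem_univ, if_true]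
  rw [eq_mul_prod_restrictions hy hX1 hX2 a]
  congr 1
  by_cases hv : v i = 0
  · simp [ha, hv, ← Pi.zero_def]
  · simp [ha, hv, mul_div_cancel₀ _ (hy 0)]

/-- **Theorem (HomoInhomo)**, over a finite field `F_q` (an arbitrary finite field,
since `q` ranges over all prime powers).  The homogeneous Jacobi polynomial is
obtained from the inhomogeneous one by the substitution
`X_{(k),(ℓ)} := y_{L_{(k)}} / y_0` (for `k ∈ [g]`, `ℓ ≠ 0`, where `L_{(k)}` has `ℓ`
in position `k` and `0` elsewhere) and
`X_{K,L} := ∏_{K' ⊆ K} y_{L_{K'}}^{(-1)^{|K|-|K'|}}` for `|K| ≥ 2`, up to the factor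
`y_0^n ∏_{ℓ ≠ 0} (y_{(0,…,0,ℓ)}/y_0)^{wt_ℓ(v)}`. -/
theorem homogeneous_eq_inhomogeneous_Fq
    {Fq : Type*} [Field Fq] [Fintype Fq]
    {F : Type*} [Field F]
    {n g : ℕ} (hg : 0 < g)
    (C : Submodule Fq (Fin n → Fq)) (v : Fin n → Fq)
    (y : (Fin (g+1) → Fq) → F) (hy : ∀ b, y b ≠ 0)
    (X : (Fin (g+1) → Fq) → F)
    (hX1 : ∀ (m : Fin g) (ℓ : Fq), ℓ ≠ 0 →
      X (fun i => if i = m.castSucc then ℓ else 0)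
        = y (fun i => if i = m.castSucc then ℓ else 0) / y 0)
    (hX2 : ∀ b : Fin (g+1) → Fq,
      2 ≤ (Finset.univ.filter (fun i => b i ≠ 0)).card →
      X b = ∏ K' ∈ (Finset.univ.filter (fun i => b i ≠ 0)).powerset,
        y (fun i => if i ∈ K' then b i else 0)
          ^ ((-1 : ℤ) ^ ((Finset.univ.filter (fun i => b i ≠ 0)).card - K'.card))) :
    JacHom C v y
      = y 0 ^ n *
        (∏ ℓ ∈ Finset.univ.filter (fun ℓ : Fq => ℓ ≠ 0),
          (y (fun i => if i = Fin.last g then ℓ else 0) / y 0)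
            ^ (Finset.univ.filter (fun i : Fin n => v i = ℓ)).card) *
        JacInhom C v X :=
  homogeneous_eq_inhomogeneous_Fq_general C v y hy X hX1 hX2
end

section
/- Let k ≥ 2 be an integer, let C be a linear code of length n over Z_k, let g be a positive integer, let v ∈ (Z_k)^n, let F be a field, and let y : (Z_k)^{g+1} → F be a family with y_b ≠ 0 for all b ∈ (Z_k)^{g+1}. Then 𝔍ac^{(g)}_{C,v}(y) = y_0^n · ∏_{ℓ ∈ Z_k\{0}} (y_{(0,…,0,ℓ)} / y_0)^{wt_ℓ(v)} · Jac^{(g)}_{C,v}(X), where the variables X are given by: X_{(k),(ℓ)} := y_{L_{(k)}} / y_0 for k ∈ {1,…,g} and ℓ ∈ Z_k\{0} (with L_{(k)} ∈ (Z_k)^{g+1} the vector with ℓ in position k and 0 elsewhere), and X_{K,L} := ∏_{K' ⊆ K} y_{L_{K'}}^{(-1)^{|K| - |K'|}} for K ∈ ([g+1] choose p) with 2 ≤ p ≤ g+1 and L ∈ (Z_k\{0})^p, the product over all subtuples K' of K including the empty tuple. -/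
/-!
Fix the codewords `u_1, …, u_g` and a coordinate `i`, and let `a = (u_{1,i}, …, u_{g,i}, v_i)`.
The left side contributes `y_a`, the right side the product of `X_b` over the nonzero
restrictions `b` of `a` (the vectors agreeing with `a` on their own support). The substituted
value of `X_b` is the Möbius transform of `y` on the Boolean lattice of subsets of the support
of `b`, so by Möbius inversion `y_a` is the product of the transforms of all restrictions of `a`.
When `b` has a nonzero entry among the first `g` coordinates its transform is `X_b`; the other
restrictions of `a` are those of `(0, …, 0, v_i)`, and by inversion again their transforms
multiply to `y_{(0,…,0,v_i)} = y_0 · (y_{(0,…,0,v_i)} / y_0)`, which gives the prefactor.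
-/

open scoped Classical

open Finset

namespace Finset

section CommMonoid

variable {α β M : Type*} [CommMonoid M]

lemma prod_pow_card_filter_eq_prod_prod_filter (s : Finset β) (t : Finset α)
    (p : α → β → Prop) [∀ i b, Decidable (p i b)] (f : β → M) :
    ∏ b ∈ s, f b ^ #{i ∈ t | p i b} = ∏ i ∈ t, ∏ b ∈ s with p i b, f b := by
  simp_rw [← prod_const]
  exact prod_comm' fun b i => by simp only [mem_filter]; tauto

lemma prod_pow_card_fiber [Fintype β] (t : Finset α) (g : α → β) [∀ i b, Decidable (g i = b)]
    (f : β → M) :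
    ∏ b, f b ^ #{i ∈ t | g i = b} = ∏ i ∈ t, f (g i) := by
  rw [prod_pow_card_filter_eq_prod_prod_filter]
  refine prod_congr rfl fun i _ => ?_
  rw [prod_filter, prod_eq_single (g i) (fun b _ hb => if_neg hb.symm) (by simp), if_pos rfl]

end CommMonoid

section CommGroup

variable {ι G : Type*} [CommGroup G]

lemma prod_zpow_eq_zpow_sum (s : Finset ι) (e : ι → ℤ) (a : G) :
    ∏ i ∈ s, a ^ e i = a ^ ∑ i ∈ s, e i :=
  cons_induction (by simp) (fun _ _ _ _ ↦ by simp [zpow_add, *]) s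

variable [DecidableEq ι]

lemma sum_Icc_neg_one_pow_card_sub (L S : Finset ι) :
    ∑ K ∈ Icc L S, (-1 : ℤ) ^ (#K - #L) = if L = S then 1 else 0 := by
  by_cases hLS : L ⊆ S
  · have hdisj : ∀ T ∈ (S \ L).powerset, Disjoint L T := fun T hT =>
      disjoint_of_subset_right (mem_powerset.mp hT) disjoint_sdiff
    rw [Icc_eq_image_powerset hLS, sum_image fun T₁ h₁ T₂ h₂ h => by
      rw [← union_sdiff_cancel_left (hdisj T₁ h₁), h, union_sdiff_cancel_left (hdisj T₂ h₂)]]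
    rw [sum_congr rfl fun T hT => by
      rw [card_union_of_disjoint (hdisj T hT), Nat.add_sub_cancel_left],
      sum_powerset_neg_one_pow_card]
    exact if_congr (sdiff_eq_empty_iff_subset.trans ⟨subset_antisymm hLS, (·.ge)⟩) rfl rfl
  · rw [Icc_eq_empty (by simpa using hLS), sum_empty, if_neg (by rintro rfl; exact hLS le_rfl)]

lemma prod_powerset_prod_powerset_zpow (S : Finset ι) (f : Finset ι → G) :
    ∏ K ∈ S.powerset, ∏ L ∈ K.powerset, f L ^ ((-1 : ℤ) ^ (#K - #L)) = f S := by
  calc _ = ∏ L ∈ S.powerset, ∏ K ∈ Icc L S, f L ^ ((-1 : ℤ) ^ (#K - #L)) :=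
        prod_comm' fun K L => by simp only [mem_powerset, mem_Icc]; grind
    _ = ∏ L ∈ S.powerset, if L = S then f L else 1 := by
        refine prod_congr rfl fun L _ => ?_
        rw [prod_zpow_eq_zpow_sum, sum_Icc_neg_one_pow_card_sub]
        split_ifs <;> simp
    _ = f S := by simp

end CommGroup

end Finset

section Restriction

variable {ι R : Type*} [Zero R]

def IsRestriction (b a : ι → R) : Prop := ∀ t, b t ≠ 0 → b t = a t

lemma isRestriction_refl (a : ι → R) : IsRestriction a a := fun _ _ => rfl

variable [DecidableEq ι]

lemma isRestriction_piecewise (a : ι → R) (K : Finset ι) : IsRestriction (K.piecewise a 0) a := by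
  intro i hi
  by_cases hK : i ∈ K
  · simp [hK]
  · simp [hK] at hi

lemma isRestriction_piecewise_iff {b a : ι → R} {K : Finset ι} :
    IsRestriction b (K.piecewise a 0) ↔ IsRestriction b a ∧ ∀ t ∉ K, b t = 0 := by
  unfold IsRestriction Finset.piecewise
  simp only [Pi.zero_apply]
  grind

lemma piecewise_singleton_zero (a : ι → R) (t : ι) :
    ({t} : Finset ι).piecewise a 0 = Pi.single t (a t) := by
  rw [piecewise_singleton]
  rfl

variable [Fintype ι] [DecidableEq R]

def finSupport (b : ι → R) : Finset ι := {i | b i ≠ 0}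

omit [DecidableEq ι] in
lemma mem_finSupport {b : ι → R} {i : ι} : i ∈ finSupport b ↔ b i ≠ 0 := by
  simp [finSupport]

lemma finSupport_piecewise {a : ι → R} {K : Finset ι} (hK : K ⊆ finSupport a) :
    finSupport (K.piecewise a 0) = K := by
  ext i
  by_cases hi : i ∈ K
  · simpa [mem_finSupport, hi] using hK hi
  · simp [mem_finSupport, hi]

lemma piecewise_finSupport {b a : ι → R} (h : IsRestriction b a) :
    (finSupport b).piecewise a 0 = b := by
  ext i
  by_cases hi : b i = 0
  · simp [mem_finSupport, hi]
  · rw [piecewise_eq_of_mem _ _ _ (mem_finSupport.mpr hi), h i hi]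

lemma prod_isRestriction {M : Type*} [CommMonoid M] [Fintype R] (a : ι → R) (f : (ι → R) → M) :
    ∏ b with IsRestriction b a, f b = ∏ K ∈ (finSupport a).powerset, f (K.piecewise a 0) := by
  refine prod_nbij' finSupport (·.piecewise a 0) (fun b hb => ?_) (fun K _ => ?_)
    (fun b hb => ?_) (fun K hK => ?_) (fun b hb => ?_)
  · rw [mem_filter] at hb
    refine mem_powerset.mpr fun i hi => ?_
    rw [mem_finSupport] at hi ⊢
    rwa [← hb.2 i hi]
  · simpa using isRestriction_piecewise a K
  · exact piecewise_finSupport (mem_filter.mp hb).2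
  · exact finSupport_piecewise (mem_powerset.mp hK)
  · rw [piecewise_finSupport (mem_filter.mp hb).2]

end Restriction

section MobiusTransform

variable {ι R : Type*} [Fintype ι] [DecidableEq ι] [Zero R] [DecidableEq R]

/-- The paper's substitution for `X_{K,L}`, where `K` is the support of `b` and `L` the list of
its nonzero entries. -/
def mobiusTransform {G : Type*} [DivisionCommMonoid G] (y : (ι → R) → G) (b : ι → R) : G :=
  ∏ L ∈ (finSupport b).powerset, y (L.piecewise b 0) ^ ((-1 : ℤ) ^ (#(finSupport b) - #L))

variable {G : Type*}

lemma map_mobiusTransform [CommGroup G] {H : Type*} [DivisionCommMonoid H] (φ : G →* H)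
    (y : (ι → R) → G) (b : ι → R) :
    φ (mobiusTransform y b) = mobiusTransform (φ ∘ y) b := by
  simp [mobiusTransform, map_prod, map_zpow]

lemma mobiusTransform_piecewise [DivisionCommMonoid G] (y : (ι → R) → G) {a : ι → R}
    {K : Finset ι} (hK : K ⊆ finSupport a) :
    mobiusTransform y (K.piecewise a 0)
      = ∏ L ∈ K.powerset, y (L.piecewise a 0) ^ ((-1 : ℤ) ^ (#K - #L)) := by
  rw [mobiusTransform, finSupport_piecewise hK]
  refine prod_congr rfl fun L hL => ?_
  rw [piecewise_piecewise_of_subset_left (mem_powerset.mp hL)]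

lemma prod_mobiusTransform [CommGroup G] [Fintype R] (y : (ι → R) → G) (a : ι → R) :
    ∏ b with IsRestriction b a, mobiusTransform y b = y a := by
  rw [prod_isRestriction,
    prod_congr rfl fun K hK => mobiusTransform_piecewise y (mem_powerset.mp hK),
    prod_powerset_prod_powerset_zpow, piecewise_finSupport (isRestriction_refl a)]

lemma prod_mobiusTransform_of_ne_zero [CommGroupWithZero G] [Fintype R] (y : (ι → R) → G)
    (hy : ∀ b, y b ≠ 0) (a : ι → R) :
    ∏ b with IsRestriction b a, mobiusTransform y b = y a := by
  simpa [map_mobiusTransform, Function.comp_def] using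
    congrArg (Units.coeHom G) (prod_mobiusTransform (fun b => Units.mk0 (y b) (hy b)) a)

lemma mobiusTransform_single [DivisionCommMonoid G] (y : (ι → R) → G) (t : ι) {ℓ : R}
    (hℓ : ℓ ≠ 0) :
    mobiusTransform y (Pi.single t ℓ) = y (Pi.single t ℓ) / y 0 := by
  have hsupp : finSupport (Pi.single t ℓ) = {t} := by
    ext i
    by_cases hi : i = t <;> simp [mem_finSupport, hi, hℓ]
  have hpow : ({t} : Finset ι).powerset = {∅, {t}} := by ext; simp [subset_singleton_iff]
  have hself := piecewise_finSupport (isRestriction_refl (Pi.single t ℓ))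
  rw [hsupp] at hself
  rw [mobiusTransform, hsupp, hpow, prod_pair (singleton_ne_empty t).symm]
  simp [hself, div_eq_mul_inv, mul_comm]

end MobiusTransform

section Coordinates

variable {R : Type*} [Zero R] {g : ℕ}

lemma isRestriction_snoc_iff {b : Fin (g + 1) → R} {p : Fin g → R} {x : R} :
    IsRestriction b (Fin.snoc p x)
      ↔ (∀ j, b j.castSucc ≠ 0 → p j = b j.castSucc) ∧
        (b (Fin.last g) ≠ 0 → x = b (Fin.last g)) := by
  simp [IsRestriction, Fin.forall_fin_succ', eq_comm]

lemma isRestriction_single_last_iff {a b : Fin (g + 1) → R} :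
    IsRestriction b (Pi.single (Fin.last g) (a (Fin.last g)))
      ↔ IsRestriction b a ∧ ∀ j : Fin g, b j.castSucc = 0 := by
  rw [← piecewise_singleton_zero, isRestriction_piecewise_iff]
  simp [Fin.forall_fin_succ', (Fin.castSucc_lt_last _).ne]

variable [DecidableEq R] {F : Type*} [Field F] {y X : (Fin (g + 1) → R) → F}

lemma mobiusTransform_eq_of_castSucc_ne_zero
    (hX1 : ∀ (m : Fin g) (ℓ : R), ℓ ≠ 0 →
      X (Pi.single m.castSucc ℓ) = y (Pi.single m.castSucc ℓ) / y 0)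
    (hX2 : ∀ b, 2 ≤ #(finSupport b) → X b = mobiusTransform y b)
    {b : Fin (g + 1) → R} {j : Fin g} (hj : b j.castSucc ≠ 0) :
    mobiusTransform y b = X b := by
  obtain h2 | h1 := le_or_gt 2 #(finSupport b)
  · exact (hX2 b h2).symm
  · have hj' : j.castSucc ∈ finSupport b := mem_finSupport.mpr hj
    have hsupp : finSupport b = {j.castSucc} :=
      eq_singleton_iff_unique_mem.mpr ⟨hj', fun t ht => card_le_one.mp (by omega) t ht _ hj'⟩
    have hb : b = Pi.single j.castSucc (b j.castSucc) := calc
      b = (finSupport b).piecewise b 0 := (piecewise_finSupport (isRestriction_refl b)).symm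
      _ = _ := by rw [hsupp, piecewise_singleton_zero]
    rw [hb, mobiusTransform_single y _ hj, hX1 j _ hj]

lemma apply_eq_mul_prod_isRestriction [Fintype R] (hy : ∀ b, y b ≠ 0)
    (hX1 : ∀ (m : Fin g) (ℓ : R), ℓ ≠ 0 →
      X (Pi.single m.castSucc ℓ) = y (Pi.single m.castSucc ℓ) / y 0)
    (hX2 : ∀ b, 2 ≤ #(finSupport b) → X b = mobiusTransform y b) (a : Fin (g + 1) → R) :
    y a = y (Pi.single (Fin.last g) (a (Fin.last g))) *
      ∏ b with b ≠ 0 ∧ IsRestriction b a, if ∀ j : Fin g, b j.castSucc = 0 then 1 else X b := by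
  calc y a = ∏ b with IsRestriction b a, mobiusTransform y b :=
        (prod_mobiusTransform_of_ne_zero y hy a).symm
    _ = (∏ b with IsRestriction b a ∧ ∀ j : Fin g, b j.castSucc = 0, mobiusTransform y b) *
        ∏ b with IsRestriction b a ∧ ¬∀ j : Fin g, b j.castSucc = 0, mobiusTransform y b := by
        rw [← filter_filter, ← filter_filter, prod_filter_mul_prod_filter_not]
    _ = y (Pi.single (Fin.last g) (a (Fin.last g))) *
        ∏ b with IsRestriction b a ∧ ¬∀ j : Fin g, b j.castSucc = 0, X b := by
        congr 1
        · simp_rw [← isRestriction_single_last_iff]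
          exact prod_mobiusTransform_of_ne_zero y hy _
        · refine prod_congr rfl fun b hb => ?_
          obtain ⟨j, hj⟩ := not_forall.mp (mem_filter.mp hb).2.2
          exact mobiusTransform_eq_of_castSucc_ne_zero hX1 hX2 hj
    _ = _ := by
        rw [prod_ite, prod_const_one, one_mul, filter_filter]
        congr 2
        ext b
        have hne (hb : ¬∀ j : Fin g, b j.castSucc = 0) : b ≠ 0 :=
          fun h0 => hb fun j => by simp [h0]
        simp only [mem_filter, mem_univ, true_and]
        exact ⟨fun ⟨h, hb⟩ => ⟨⟨hne hb, h⟩, hb⟩, fun ⟨⟨_, h⟩, hb⟩ => ⟨h, hb⟩⟩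

end Coordinates

section JacobiTerms

variable {R M : Type*} [Fintype R] [CommMonoid M] {n g : ℕ}

lemma prod_pow_card_eq_prod_snoc (y : (Fin (g + 1) → R) → M) (u : Fin g → Fin n → R)
    (v : Fin n → R) :
    ∏ a, y a ^ #{i | (∀ j, u j i = a j.castSucc) ∧ v i = a (Fin.last g)}
      = ∏ i, y (Fin.snoc (fun j => u j i) (v i)) := by
  rw [← prod_pow_card_fiber]
  refine prod_congr rfl fun a _ => ?_
  congr 2
  ext i
  simp [funext_iff, Fin.forall_fin_succ']

variable [Zero R]

lemma prod_pow_card_eq_prod_prod_isRestriction_snoc (X : (Fin (g + 1) → R) → M)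
    (u : Fin g → Fin n → R) (v : Fin n → R) :
    ∏ b with b ≠ 0, X b ^ #{i | (∀ j, b j.castSucc ≠ 0 → u j i = b j.castSucc) ∧
        (b (Fin.last g) ≠ 0 → v i = b (Fin.last g))}
      = ∏ i, ∏ b with b ≠ 0 ∧ IsRestriction b (Fin.snoc (fun j => u j i) (v i)), X b := by
  simp_rw [prod_pow_card_filter_eq_prod_prod_filter, filter_filter, isRestriction_snoc_iff]

lemma pow_mul_prod_filter_ne_zero_div_pow_card [DecidableEq R] {F : Type*} [Field F] {c : F}
    (hc : c ≠ 0) (f : R → F) (hf : f 0 = c) (v : Fin n → R) :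
    c ^ n * ∏ ℓ with ℓ ≠ 0, (f ℓ / c) ^ #{i | v i = ℓ} = ∏ i, f (v i) := by
  rw [prod_filter_of_ne (p := (· ≠ 0)) fun ℓ _ hℓ h0 => hℓ (by rw [h0, hf, div_self hc, one_pow]),
    prod_pow_card_fiber, prod_div_distrib, prod_const, card_univ, Fintype.card_fin,
    mul_div_cancel₀ _ (pow_ne_zero n hc)]

end JacobiTerms

theorem homogeneous_eq_inhomogeneous_Zk_general
    (k : ℕ) [NeZero k]
    {F : Type*} [Field F]
    {n g : ℕ}
    (C : Submodule (ZMod k) (Fin n → (ZMod k))) (v : Fin n → (ZMod k))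
    (y : (Fin (g+1) → (ZMod k)) → F) (hy : ∀ b, y b ≠ 0)
    (X : (Fin (g+1) → (ZMod k)) → F)
    (hX1 : ∀ (m : Fin g) (ℓ : (ZMod k)), ℓ ≠ 0 →
      X (fun i => if i = m.castSucc then ℓ else 0)
        = y (fun i => if i = m.castSucc then ℓ else 0) / y 0)
    (hX2 : ∀ b : Fin (g+1) → (ZMod k),
      2 ≤ (Finset.univ.filter (fun i => b i ≠ 0)).card →
      X b = ∏ K' ∈ (Finset.univ.filter (fun i => b i ≠ 0)).powerset,
        y (fun i => if i ∈ K' then b i else 0)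
          ^ ((-1 : ℤ) ^ ((Finset.univ.filter (fun i => b i ≠ 0)).card - K'.card))) :
    JacHom C v y
      = y 0 ^ n *
        (∏ ℓ ∈ Finset.univ.filter (fun ℓ : (ZMod k) => ℓ ≠ 0),
          (y (fun i => if i = Fin.last g then ℓ else 0) / y 0)
            ^ (Finset.univ.filter (fun i : Fin n => v i = ℓ)).card) *
        JacInhom C v X := by
  have hsingle (t : Fin (g + 1)) (ℓ : ZMod k) :
      (fun i => if i = t then ℓ else 0) = Pi.single t ℓ :=
    funext fun i => (Pi.single_apply t ℓ i).symm
  simp only [hsingle] at hX1 ⊢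
  unfold JacHom JacInhom
  rw [mul_sum]
  refine sum_congr rfl fun u _ => ?_
  rw [prod_pow_card_eq_prod_snoc y (fun j => (u j : Fin n → ZMod k)),
    prod_pow_card_eq_prod_prod_isRestriction_snoc _ (fun j => (u j : Fin n → ZMod k)),
    pow_mul_prod_filter_ne_zero_div_pow_card (hy 0) (fun ℓ => y (Pi.single (Fin.last g) ℓ))
      (by rw [Pi.single_zero]),
    ← prod_mul_distrib]
  refine prod_congr rfl fun i _ => ?_
  -- `hX2` is `X b = mobiusTransform y b` with `finSupport` and `mobiusTransform` unfolded
  rw [apply_eq_mul_prod_isRestriction hy hX1 hX2, Fin.snoc_last]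
  -- the sides differ only in `Decidable` instances: classical in `JacInhom`, from `ZMod k` here
  congr!

/-- **Theorem (HomoInhomo)**, over `Z_k` (`k ≥ 2`).  The homogeneous Jacobi polynomial is
obtained from the inhomogeneous one by the substitution
`X_{(k),(ℓ)} := y_{L_{(k)}} / y_0` (for `k ∈ [g]`, `ℓ ≠ 0`, where `L_{(k)}` has `ℓ`
in position `k` and `0` elsewhere) and
`X_{K,L} := ∏_{K' ⊆ K} y_{L_{K'}}^{(-1)^{|K|-|K'|}}` for `|K| ≥ 2`, up to the factor
`y_0^n ∏_{ℓ ≠ 0} (y_{(0,…,0,ℓ)}/y_0)^{wt_ℓ(v)}`. -/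
theorem homogeneous_eq_inhomogeneous_Zk
    (k : ℕ) (hk : 2 ≤ k) [NeZero k]
    {F : Type*} [Field F]
    {n g : ℕ} (hg : 0 < g)
    (C : Submodule (ZMod k) (Fin n → (ZMod k))) (v : Fin n → (ZMod k))
    (y : (Fin (g+1) → (ZMod k)) → F) (hy : ∀ b, y b ≠ 0)
    (X : (Fin (g+1) → (ZMod k)) → F)
    (hX1 : ∀ (m : Fin g) (ℓ : (ZMod k)), ℓ ≠ 0 →
      X (fun i => if i = m.castSucc then ℓ else 0)
        = y (fun i => if i = m.castSucc then ℓ else 0) / y 0)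
    (hX2 : ∀ b : Fin (g+1) → (ZMod k),
      2 ≤ (Finset.univ.filter (fun i => b i ≠ 0)).card →
      X b = ∏ K' ∈ (Finset.univ.filter (fun i => b i ≠ 0)).powerset,
        y (fun i => if i ∈ K' then b i else 0)
          ^ ((-1 : ℤ) ^ ((Finset.univ.filter (fun i => b i ≠ 0)).card - K'.card))) :
    JacHom C v y
      = y 0 ^ n *
        (∏ ℓ ∈ Finset.univ.filter (fun ℓ : (ZMod k) => ℓ ≠ 0),
          (y (fun i => if i = Fin.last g then ℓ else 0) / y 0)
            ^ (Finset.univ.filter (fun i : Fin n => v i = ℓ)).card) *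
        JacInhom C v X :=
  homogeneous_eq_inhomogeneous_Zk_general k C v y hy X hX1 hX2
end
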